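/- Let D be a dyadic lattice in ℝ^d and let w be a weight such that w(H) = +∞ for every quadrant H of D. Let 1 < p ≤ q ≤ ∞ and α ∈ [0, d) satisfy 1/q + α/d = 1/p. Then there is a constant C depending only on α, d, p, q such that ‖M^D_{α,w} f‖_{L^q(ℝ^d, w dx)} ≤ C ‖f‖_{L^p(ℝ^d, w dx)} for all f ∈ L^p(ℝ^d, w dx). -/

import Mathlib

open MeasureTheory ENNReal NNReal Set

noncomputable section

/-- A half-open axis-parallel cube in `ℝ^d`, given by its corner and (positive) sidelength. -/
structure Cube (d : ℕ) where
  corner : Fin d → ℝ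
  side : ℝ
  side_pos : 0 < side

namespace Cube

variable {d : ℕ}

/-- The set of points of the cube: `[x_1, x_1+l) × ⋯ × [x_d, x_d+l)`. -/
def toSet (Q : Cube d) : Set (Fin d → ℝ) :=
  {y | ∀ i, Q.corner i ≤ y i ∧ y i < Q.corner i + Q.side}

/-- The translate `Q + l(Q) m` of a cube. -/
def translate (Q : Cube d) (m : Fin d → ℤ) : Cube d :=
  ⟨fun i => Q.corner i + Q.side * (m i : ℝ), Q.side, Q.side_pos⟩

/-- The corner child `x(Q) + (1/2)(Q - x(Q))` of a cube. -/
def cornerChild (Q : Cube d) : Cube d :=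
  ⟨Q.corner, Q.side / 2, by have := Q.side_pos; linarith⟩

/-- The threefold expansion `x(Q) + 3(Q - x(Q))` of a cube from its corner. -/
def expand3 (Q : Cube d) : Cube d :=
  ⟨Q.corner, 3 * Q.side, by have := Q.side_pos; linarith⟩

/-- The dilate `D_c Q`: cube with the same center as `Q` and sidelength `c·l(Q)`. -/
def dilate (Q : Cube d) (c : ℝ) (hc : 0 < c) : Cube d :=
  ⟨fun i => Q.corner i + Q.side / 2 - c * Q.side / 2, c * Q.side, by
    have := Q.side_pos; positivity⟩

end Cube

/-- A dyadic lattice in `ℝ^d`: a family of generations of cubes, each generation formed by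
all translates of one of its cubes, and each generation containing a cube whose corner child
belongs to the next generation. -/
structure DyadicLattice (d : ℕ) where
  gen : ℤ → Set (Cube d)
  gen_translates : ∀ k, ∃ Q ∈ gen k, gen k = {R | ∃ m : Fin d → ℤ, R = Q.translate m}
  cornerChild_mem : ∀ k, ∃ Q ∈ gen k, Q.cornerChild ∈ gen (k + 1)

/-- The collection of all cubes of a dyadic lattice. -/
def DyadicLattice.cubes {d : ℕ} (D : DyadicLattice d) : Set (Cube d) := ⋃ k, D.gen k

/-- The quadrant of a dyadic lattice containing `x`: the union of all cubes of the lattice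
containing `x`. -/
def DyadicLattice.quadrant {d : ℕ} (D : DyadicLattice d) (x : Fin d → ℝ) :
    Set (Fin d → ℝ) :=
  ⋃ Q ∈ {Q : Cube d | Q ∈ D.cubes ∧ x ∈ Q.toSet}, Q.toSet

/-- A weight: a locally integrable, a.e. positive (and finite) function. -/
def IsWeight {d : ℕ} (w : (Fin d → ℝ) → ℝ) : Prop :=
  LocallyIntegrable w volume ∧ ∀ᵐ x ∂(volume : Measure (Fin d → ℝ)), 0 < w x

/-- The measure `w dx` associated to a weight. -/
def wMeasure {d : ℕ} (w : (Fin d → ℝ) → ℝ) : Measure (Fin d → ℝ) :=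
  volume.withDensity fun x => ENNReal.ofReal (w x)

/-- `w(E) = ∫_E w dx`. -/
def wInt {d : ℕ} (w : (Fin d → ℝ) → ℝ) (E : Set (Fin d → ℝ)) : ℝ≥0∞ :=
  ∫⁻ x in E, ENNReal.ofReal (w x)

/-- The `L^q` norm (with `q = ∞` allowed) of an `ℝ≥0∞`-valued function. -/
def eLpNormENN {X : Type*} [MeasurableSpace X] (g : X → ℝ≥0∞) (q : ℝ≥0∞)
    (μ : Measure X) : ℝ≥0∞ :=
  if q = ∞ then essSup g μ
  else (∫⁻ x, g x ^ q.toReal ∂μ) ^ (1 / q.toReal)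

/-- The weak `L^q` quasinorm (with `q = ∞` allowed, interpreted as the `L^∞` norm) of an
`ℝ≥0∞`-valued function: `sup_{t>0} t · μ{g > t}^{1/q}`. -/
def wnormENN {X : Type*} [MeasurableSpace X] (g : X → ℝ≥0∞) (q : ℝ≥0∞)
    (μ : Measure X) : ℝ≥0∞ :=
  if q = ∞ then essSup g μ
  else ⨆ t : ℝ≥0, (t : ℝ≥0∞) * μ {x | (t : ℝ≥0∞) < g x} ^ (1 / q.toReal)

/-- The weighted dyadic fractional maximal operator
`M^D_{α,w} f(x) = sup_{Q ∈ D, x ∈ Q} w(Q)^{α/d-1} ∫_Q |f| w`. -/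
def MwDyadic {d : ℕ} (D : DyadicLattice d) (α : ℝ) (w f : (Fin d → ℝ) → ℝ)
    (x : Fin d → ℝ) : ℝ≥0∞ :=
  ⨆ (Q : Cube d) (_ : Q ∈ D.cubes) (_ : x ∈ Q.toSet),
    wInt w Q.toSet ^ (α / (d : ℝ) - 1) *
      ∫⁻ y in Q.toSet, (‖f y‖₊ : ℝ≥0∞) * ENNReal.ofReal (w y)

/-- The dyadic fractional maximal operator `M^D_α f(x) = sup_{Q ∈ D, x ∈ Q} |Q|^{α/d} ⨍_Q |f|`. -/
def MfracDyadic {d : ℕ} (D : DyadicLattice d) (α : ℝ) (f : (Fin d → ℝ) → ℝ)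
    (x : Fin d → ℝ) : ℝ≥0∞ :=
  ⨆ (Q : Cube d) (_ : Q ∈ D.cubes) (_ : x ∈ Q.toSet),
    volume Q.toSet ^ (α / (d : ℝ) - 1) * ∫⁻ y in Q.toSet, (‖f y‖₊ : ℝ≥0∞)

/-- The fractional maximal operator `M_α f(x) = sup_{Q ∋ x} |Q|^{α/d} ⨍_Q |f|`,
supremum over all cubes containing `x`. -/
def Mfrac {d : ℕ} (α : ℝ) (f : (Fin d → ℝ) → ℝ) (x : Fin d → ℝ) : ℝ≥0∞ :=
  ⨆ (Q : Cube d) (_ : x ∈ Q.toSet),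
    volume Q.toSet ^ (α / (d : ℝ) - 1) * ∫⁻ y in Q.toSet, (‖f y‖₊ : ℝ≥0∞)

/-- The weighted fractional maximal operator
`M_{α,w} f(x) = sup_{Q ∋ x} w(Q)^{α/d-1} ∫_Q |f| w`, supremum over all cubes containing `x`. -/
def Mwfrac {d : ℕ} (α : ℝ) (w f : (Fin d → ℝ) → ℝ) (x : Fin d → ℝ) : ℝ≥0∞ :=
  ⨆ (Q : Cube d) (_ : x ∈ Q.toSet),
    wInt w Q.toSet ^ (α / (d : ℝ) - 1) *
      ∫⁻ y in Q.toSet, (‖f y‖₊ : ℝ≥0∞) * ENNReal.ofReal (w y)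

/-- An `η`-sparse collection of cubes: each cube `Q` has a measurable subset `G(Q)` with
`|G(Q)| ≥ η|Q|`, the sets `G(Q)` being pairwise disjoint. -/
def IsSparseCubes {d : ℕ} (η : ℝ) (S : Set (Cube d)) : Prop :=
  ∃ G : Cube d → Set (Fin d → ℝ),
    (∀ Q ∈ S, G Q ⊆ Q.toSet ∧ MeasurableSet (G Q) ∧
      ENNReal.ofReal η * volume Q.toSet ≤ volume (G Q)) ∧
    S.PairwiseDisjoint G

/-- The sparse operator `A_S^α f(x) = Σ_{Q ∈ S} χ_Q(x) |Q|^{α/d} ⨍_Q |f|`. -/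
def sparseOp {d : ℕ} (α : ℝ) (S : Set (Cube d)) (f : (Fin d → ℝ) → ℝ)
    (x : Fin d → ℝ) : ℝ≥0∞ :=
  ∑' Q : S, (Q : Cube d).toSet.indicator
    (fun _ => volume (Q : Cube d).toSet ^ (α / (d : ℝ) - 1) *
      ∫⁻ y in (Q : Cube d).toSet, (‖f y‖₊ : ℝ≥0∞)) x

/-- The `A_{p,q}^α` constant of a pair of weights:
`[v,w] = sup_Q |Q|^{α/d-1} (∫_Q v^{-p'/p})^{1/p'} (∫_Q w)^{1/q}` where `p' = p/(p-1)`. -/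
def apqConst {d : ℕ} (p q α : ℝ) (v w : (Fin d → ℝ) → ℝ) : ℝ≥0∞ :=
  ⨆ Q : Cube d,
    volume Q.toSet ^ (α / (d : ℝ) - 1) *
      (∫⁻ x in Q.toSet, ENNReal.ofReal (v x ^ (-(p / (p - 1)) / p))) ^ ((p - 1) / p) *
      (∫⁻ x in Q.toSet, ENNReal.ofReal (w x)) ^ (1 / q)

/-- The Muckenhoupt `A_∞` condition: `sup_Q exp(⨍_Q log w⁻¹) · ⨍_Q w < ∞`. -/
def IsAinfty {d : ℕ} (w : (Fin d → ℝ) → ℝ) : Prop :=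
  ∃ C : ℝ, ∀ Q : Cube d,
    Real.exp (⨍ x in Q.toSet, Real.log (w x)⁻¹ ∂volume) *
      (⨍ x in Q.toSet, w x ∂volume) ≤ C

/-- The Euclidean norm of a point of `ℝ^d`. -/
def euclNorm {d : ℕ} (x : Fin d → ℝ) : ℝ := Real.sqrt (∑ i, x i ^ 2)

/-- The auxiliary maximal operator `M_{T,λ}` controlling oscillations of truncations of `T`:
`M_{T,λ} f(x) = sup_{Q ∋ x} ess sup_{x',x'' ∈ Q} |T(fχ_{ℝ^d∖Q*})(x') − T(fχ_{ℝ^d∖Q*})(x'')|`. -/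
def MT {d : ℕ} (T : ((Fin d → ℝ) → ℝ) → (Fin d → ℝ) → ℝ) (lam : ℝ) (hlam : 0 < lam)
    (f : (Fin d → ℝ) → ℝ) (x : Fin d → ℝ) : ℝ≥0∞ :=
  ⨆ (Q : Cube d) (_ : x ∈ Q.toSet),
    essSup
      (fun z : (Fin d → ℝ) × (Fin d → ℝ) =>
        (‖T (((Q.dilate lam hlam).toSet)ᶜ.indicator f) z.1 -
            T (((Q.dilate lam hlam).toSet)ᶜ.indicator f) z.2‖₊ : ℝ≥0∞))
      ((volume.restrict Q.toSet).prod (volume.restrict Q.toSet))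

end

/-!
Write `μ = w dx` and `N = ‖f‖_{L^p(μ)}`. On a cube, Hölder's inequality gives
`μ(Q)^{α/d-1} ∫_Q |f| dμ ≤ (⨍_Q |f| dμ)^θ N^{1-θ}` with `θ = p/q`, hence
`M^D_{α,w} f ≤ (M^D_μ |f|)^θ N^{1-θ}` pointwise, and the claim reduces to the `L^p(μ)` bound
for the dyadic maximal function `M^D_μ` (when `q = ∞`, `θ = 0` and Hölder alone suffices).
That bound follows from the weak type `(1, 1)` estimate by a dyadic layer-cake summation. The weak
type estimate is the Calderón–Zygmund decomposition into maximal dyadic cubes, which exist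
because every quadrant has infinite `w`-measure.
-/

namespace Cube

variable {d : ℕ}

lemma toSet_eq_pi (Q : Cube d) :
    Q.toSet = Set.univ.pi fun i => Ico (Q.corner i) (Q.corner i + Q.side) := by
  ext y
  simp [Cube.toSet]

lemma measurableSet_toSet (Q : Cube d) : MeasurableSet Q.toSet := by
  rw [toSet_eq_pi]
  exact MeasurableSet.univ_pi fun _ => measurableSet_Ico

lemma mem_translate_iff {Q : Cube d} {m : Fin d → ℤ} {x : Fin d → ℝ} :
    x ∈ (Q.translate m).toSet ↔
      ∀ i, Q.corner i + Q.side * m i ≤ x i ∧ x i < Q.corner i + Q.side * m i + Q.side :=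
  Iff.rfl

lemma translate_translate (Q : Cube d) (m m' : Fin d → ℤ) :
    (Q.translate m).translate m' = Q.translate (m + m') := by
  simp only [translate, mk.injEq, and_true]
  funext i
  push_cast [Pi.add_apply]
  ring

lemma exists_mem_translate (Q : Cube d) (x : Fin d → ℝ) :
    ∃ m, x ∈ (Q.translate m).toSet := by
  refine ⟨fun i => ⌊(x i - Q.corner i) / Q.side⌋, mem_translate_iff.2 fun i => ?_⟩
  have hl := Q.side_pos
  have h₁ := Int.floor_le ((x i - Q.corner i) / Q.side)
  have h₂ := Int.lt_floor_add_one ((x i - Q.corner i) / Q.side)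
  rw [le_div_iff₀ hl] at h₁
  rw [div_lt_iff₀ hl] at h₂
  constructor <;> linarith

lemma eq_of_mem_translate (Q : Cube d) {m m' : Fin d → ℤ} {x : Fin d → ℝ}
    (h : x ∈ (Q.translate m).toSet) (h' : x ∈ (Q.translate m').toSet) : m = m' := by
  funext i
  have hl := Q.side_pos
  obtain ⟨h₁, h₂⟩ := mem_translate_iff.1 h i
  obtain ⟨h₁', h₂'⟩ := mem_translate_iff.1 h' i
  have hlt : (m i : ℝ) < m' i + 1 := lt_of_mul_lt_mul_left (by linarith) hl.le
  have hlt' : (m' i : ℝ) < m i + 1 := lt_of_mul_lt_mul_left (by linarith) hl.le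
  norm_cast at hlt hlt'
  omega

end Cube

namespace DyadicLattice

variable {d : ℕ} (D : DyadicLattice d)

lemma gen_eq_of_mem {k : ℤ} {Q : Cube d} (hQ : Q ∈ D.gen k) :
    D.gen k = {R | ∃ m, R = Q.translate m} := by
  obtain ⟨Q₀, -, hgen⟩ := D.gen_translates k
  obtain ⟨m₀, rfl⟩ : ∃ m₀, Q = Q₀.translate m₀ := by rwa [hgen] at hQ
  rw [hgen]
  ext R
  constructor
  · rintro ⟨m, rfl⟩
    exact ⟨m - m₀, by rw [Cube.translate_translate, add_sub_cancel]⟩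
  · rintro ⟨m, rfl⟩
    exact ⟨m₀ + m, Cube.translate_translate _ _ _⟩

lemma exists_mem_gen (k : ℤ) (x : Fin d → ℝ) : ∃ Q ∈ D.gen k, x ∈ Q.toSet := by
  obtain ⟨Q₀, -, hgen⟩ := D.gen_translates k
  obtain ⟨m, hm⟩ := Q₀.exists_mem_translate x
  exact ⟨Q₀.translate m, hgen ▸ ⟨m, rfl⟩, hm⟩

lemma eq_of_mem_gen {k : ℤ} {Q R : Cube d} (hQ : Q ∈ D.gen k) (hR : R ∈ D.gen k)
    {x : Fin d → ℝ} (hxQ : x ∈ Q.toSet) (hxR : x ∈ R.toSet) : Q = R := by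
  rw [D.gen_eq_of_mem hQ] at hR
  obtain ⟨m, rfl⟩ := hR
  obtain rfl := Q.eq_of_mem_translate (m := 0) (by simpa [Cube.translate] using hxQ) hxR
  simp [Cube.translate]

/-- The parent of `P.cornerChild.translate m` is `P.translate ⌊m / 2⌋`. -/
lemma exists_subset_of_mem_gen_succ {k : ℤ} {R : Cube d} (hR : R ∈ D.gen (k + 1)) :
    ∃ Q ∈ D.gen k, R.toSet ⊆ Q.toSet := by
  obtain ⟨P, hP, hPc⟩ := D.cornerChild_mem k
  rw [D.gen_eq_of_mem hPc] at hR
  obtain ⟨m, rfl⟩ := hR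
  refine ⟨P.translate fun i => m i / 2, (D.gen_eq_of_mem hP) ▸ ⟨_, rfl⟩, fun y hy => ?_⟩
  refine Cube.mem_translate_iff.2 fun i => ?_
  obtain ⟨h₁, h₂⟩ := Cube.mem_translate_iff.1 hy i
  simp only [Cube.cornerChild] at h₁ h₂
  have hl := P.side_pos
  have hdiv : ((m i / 2 : ℤ) : ℝ) * 2 ≤ m i ∧ (m i : ℝ) + 1 ≤ ((m i / 2 : ℤ) : ℝ) * 2 + 2 := by
    constructor <;> norm_cast <;> omega
  constructor <;> nlinarith

lemma exists_subset_of_mem_gen_of_le {j k : ℤ} (hjk : j ≤ k) {R : Cube d} (hR : R ∈ D.gen k) :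
    ∃ Q ∈ D.gen j, R.toSet ⊆ Q.toSet := by
  induction k, hjk using Int.leInduction generalizing R with
  | base => exact ⟨R, hR, subset_rfl⟩
  | succ k _ ih =>
    obtain ⟨P, hP, hRP⟩ := D.exists_subset_of_mem_gen_succ hR
    obtain ⟨Q, hQ, hPQ⟩ := ih hP
    exact ⟨Q, hQ, hRP.trans hPQ⟩

lemma subset_of_mem_gen_of_le {j k : ℤ} (hjk : j ≤ k) {Q R : Cube d}
    (hQ : Q ∈ D.gen j) (hR : R ∈ D.gen k) {x : Fin d → ℝ}
    (hxQ : x ∈ Q.toSet) (hxR : x ∈ R.toSet) : R.toSet ⊆ Q.toSet := by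
  obtain ⟨P, hP, hRP⟩ := D.exists_subset_of_mem_gen_of_le hjk hR
  rwa [D.eq_of_mem_gen hQ hP hxQ (hRP hxR)]

/-- The cube `Q_k(x)` of generation `k` containing `x`. -/
noncomputable def cubeAt (k : ℤ) (x : Fin d → ℝ) : Cube d := (D.exists_mem_gen k x).choose

lemma cubeAt_mem_gen (k : ℤ) (x : Fin d → ℝ) : D.cubeAt k x ∈ D.gen k :=
  (D.exists_mem_gen k x).choose_spec.1

lemma mem_cubeAt (k : ℤ) (x : Fin d → ℝ) : x ∈ (D.cubeAt k x).toSet :=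
  (D.exists_mem_gen k x).choose_spec.2

lemma cubeAt_mem_cubes (k : ℤ) (x : Fin d → ℝ) : D.cubeAt k x ∈ D.cubes :=
  mem_iUnion.2 ⟨k, D.cubeAt_mem_gen k x⟩

lemma eq_cubeAt {k : ℤ} {Q : Cube d} (hQ : Q ∈ D.gen k) {x : Fin d → ℝ} (hx : x ∈ Q.toSet) :
    Q = D.cubeAt k x :=
  D.eq_of_mem_gen hQ (D.cubeAt_mem_gen k x) hx (D.mem_cubeAt k x)

lemma antitone_cubeAt (x : Fin d → ℝ) : Antitone fun k => (D.cubeAt k x).toSet :=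
  fun _ _ hjk => D.subset_of_mem_gen_of_le hjk (D.cubeAt_mem_gen _ x) (D.cubeAt_mem_gen _ x)
    (D.mem_cubeAt _ x) (D.mem_cubeAt _ x)

lemma quadrant_eq_iUnion_cubeAt (x : Fin d → ℝ) :
    D.quadrant x = ⋃ k, (D.cubeAt k x).toSet := by
  ext y
  simp only [quadrant, cubes, mem_iUnion, mem_ofPred_eq, exists_prop]
  constructor
  · rintro ⟨Q, ⟨⟨k, hQk⟩, hxQ⟩, hyQ⟩
    exact ⟨k, D.eq_cubeAt hQk hxQ ▸ hyQ⟩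
  · rintro ⟨k, hy⟩
    exact ⟨D.cubeAt k x, ⟨⟨k, D.cubeAt_mem_gen k x⟩, D.mem_cubeAt k x⟩, hy⟩

lemma measurableSet_quadrant (x : Fin d → ℝ) : MeasurableSet (D.quadrant x) := by
  rw [quadrant_eq_iUnion_cubeAt]
  exact .iUnion fun _ => Cube.measurableSet_toSet _

lemma countable_cubes : D.cubes.Countable := by
  refine countable_iUnion fun k => ?_
  obtain ⟨Q₀, -, hgen⟩ := D.gen_translates k
  rw [hgen]
  refine (countable_range Q₀.translate).mono ?_
  rintro R ⟨m, rfl⟩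
  exact ⟨m, rfl⟩

lemma exists_lt_measure_cubeAt {μ : Measure (Fin d → ℝ)} {x : Fin d → ℝ}
    (hx : μ (D.quadrant x) = ∞) {B : ℝ≥0∞} (hB : B ≠ ∞) : ∃ k, B < μ (D.cubeAt k x).toSet := by
  have hdir : Directed (· ⊆ ·) fun k => (D.cubeAt k x).toSet := (D.antitone_cubeAt x).directed_le
  rw [D.quadrant_eq_iUnion_cubeAt, hdir.measure_iUnion] at hx
  exact lt_iSup_iff.1 (hx ▸ hB.lt_top)

def maximalCubes (P : Cube d → Prop) : Set (Cube d) :=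
  {Q | ∃ k, Q ∈ D.gen k ∧ P Q ∧ ∀ j < k, ∀ R ∈ D.gen j, Q.toSet ⊆ R.toSet → ¬ P R}

variable {D}

lemma maximalCubes_subset_cubes (P : Cube d → Prop) : D.maximalCubes P ⊆ D.cubes :=
  fun _ ⟨k, hQ, _⟩ => mem_iUnion.2 ⟨k, hQ⟩

lemma pairwiseDisjoint_maximalCubes (P : Cube d → Prop) :
    (D.maximalCubes P).PairwiseDisjoint Cube.toSet := by
  have key : ∀ {Q R : Cube d} {j k : ℤ}, Q ∈ D.gen j → P Q → R ∈ D.gen k →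
      (∀ i < k, ∀ S ∈ D.gen i, R.toSet ⊆ S.toSet → ¬ P S) → j ≤ k →
      ∀ x ∈ Q.toSet, x ∈ R.toSet → Q = R := by
    intro Q R j k hQj hPQ hRk hmax hjk x hxQ hxR
    rcases hjk.lt_or_eq with hjk | rfl
    · exact absurd hPQ (hmax j hjk Q hQj (D.subset_of_mem_gen_of_le hjk.le hQj hRk hxQ hxR))
    · exact D.eq_of_mem_gen hQj hRk hxQ hxR
  rintro Q ⟨j, hQj, hPQ, hmaxQ⟩ R ⟨k, hRk, hPR, hmaxR⟩ hne
  refine disjoint_left.2 fun x hxQ hxR => hne ?_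
  rcases le_total j k with hjk | hkj
  · exact key hQj hPQ hRk hmaxR hjk x hxQ hxR
  · exact (key hRk hPR hQj hmaxQ hkj x hxR hxQ).symm

lemma exists_mem_maximalCubes {μ : Measure (Fin d → ℝ)} {P : Cube d → Prop} {B : ℝ≥0∞}
    (hB : B ≠ ∞) (hPB : ∀ Q ∈ D.cubes, P Q → μ Q.toSet ≤ B) {x : Fin d → ℝ}
    (hx : μ (D.quadrant x) = ∞) {Q : Cube d} (hQ : Q ∈ D.cubes) (hPQ : P Q)
    (hxQ : x ∈ Q.toSet) : ∃ R ∈ D.maximalCubes P, x ∈ R.toSet := by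
  obtain ⟨k₁, hk₁⟩ := D.exists_lt_measure_cubeAt hx hB
  have hbdd : ∀ k, P (D.cubeAt k x) → k₁ ≤ k := fun k hk => by
    by_contra! hlt
    exact (hk₁.trans_le (measure_mono (D.antitone_cubeAt x hlt.le))).not_ge
      (hPB _ (D.cubeAt_mem_cubes k x) hk)
  obtain ⟨k₀, hQk₀⟩ := mem_iUnion.1 hQ
  obtain ⟨k, hk, hmin⟩ :=
    Int.exists_least_of_bdd ⟨k₁, hbdd⟩ ⟨k₀, D.eq_cubeAt hQk₀ hxQ ▸ hPQ⟩
  refine ⟨D.cubeAt k x, ⟨k, D.cubeAt_mem_gen k x, hk, fun j hjk R hR hsub => ?_⟩,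
    D.mem_cubeAt k x⟩
  rw [D.eq_cubeAt hR (hsub (D.mem_cubeAt k x))]
  exact fun hPj => (hmin j hPj).not_gt hjk

end DyadicLattice

lemma MeasureTheory.measure_le_inv_mul_of_lt_setLAverage {α : Type*} [MeasurableSpace α]
    {μ : Measure α} {s : Set α} {g : α → ℝ≥0∞} {t : ℝ≥0∞} (h : t < ⨍⁻ y in s, g y ∂μ) :
    μ s ≤ t⁻¹ * ∫⁻ y in s, g y ∂μ := by
  have hlt : t * μ s < ∫⁻ y in s, g y ∂μ := mul_lt_of_lt_div (by rwa [← setLAverage_eq])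
  rcases eq_or_ne t 0 with rfl | ht0
  · rw [ENNReal.inv_zero, top_mul (pos_of_gt hlt).ne']
    exact le_top
  · exact (ENNReal.mul_le_iff_le_inv ht0 h.ne_top).1 hlt.le

namespace DyadicLattice

variable {d : ℕ} (D : DyadicLattice d) (μ : Measure (Fin d → ℝ))

noncomputable def maximalFunction (g : (Fin d → ℝ) → ℝ≥0∞) (x : Fin d → ℝ) : ℝ≥0∞ :=
  ⨆ (Q : Cube d) (_ : Q ∈ D.cubes) (_ : x ∈ Q.toSet), ⨍⁻ y in Q.toSet, g y ∂μ

variable {D μ} {g g' : (Fin d → ℝ) → ℝ≥0∞} {x : Fin d → ℝ}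

lemma setLAverage_le_maximalFunction {Q : Cube d} (hQ : Q ∈ D.cubes) (hx : x ∈ Q.toSet) :
    ⨍⁻ y in Q.toSet, g y ∂μ ≤ D.maximalFunction μ g x :=
  le_iSup₂_of_le Q hQ (le_iSup_of_le hx le_rfl)

lemma maximalFunction_le {c : ℝ≥0∞}
    (h : ∀ Q ∈ D.cubes, x ∈ Q.toSet → ⨍⁻ y in Q.toSet, g y ∂μ ≤ c) :
    D.maximalFunction μ g x ≤ c :=
  iSup₂_le fun Q hQ => iSup_le (h Q hQ)

lemma maximalFunction_le_of_le {c : ℝ≥0∞} (h : ∀ y, g y ≤ c) : D.maximalFunction μ g x ≤ c :=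
  maximalFunction_le fun Q _ _ =>
    (setLAverage_le_essSup _ _).trans (essSup_le_of_ae_le c (ae_of_all _ h))

lemma maximalFunction_add_le (hg : AEMeasurable g μ) :
    D.maximalFunction μ (g + g') x ≤ D.maximalFunction μ g x + D.maximalFunction μ g' x :=
  maximalFunction_le fun Q hQ hx => by
    rw [setLAverage_eq, Pi.add_def, lintegral_add_left' hg.restrict, ENNReal.add_div,
      ← setLAverage_eq, ← setLAverage_eq]
    exact add_le_add (setLAverage_le_maximalFunction hQ hx)
      (setLAverage_le_maximalFunction hQ hx)

lemma maximalFunction_congr_ae (h : g =ᵐ[μ] g') :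
    D.maximalFunction μ g = D.maximalFunction μ g' := by
  funext x
  simp only [maximalFunction, laverage_congr (ae_restrict_of_ae h)]

lemma setOf_lt_maximalFunction (t : ℝ≥0∞) :
    {x | t < D.maximalFunction μ g x} =
      ⋃ Q ∈ {Q | Q ∈ D.cubes ∧ t < ⨍⁻ y in Q.toSet, g y ∂μ}, Q.toSet := by
  ext x
  simp only [maximalFunction, mem_ofPred_eq, lt_iSup_iff, mem_iUnion, exists_prop]
  constructor
  · rintro ⟨Q, hQ, hx, ht⟩
    exact ⟨Q, ⟨hQ, ht⟩, hx⟩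
  · rintro ⟨Q, ⟨hQ, ht⟩, hx⟩
    exact ⟨Q, hQ, hx, ht⟩

lemma measurable_maximalFunction : Measurable (D.maximalFunction μ g) := by
  refine measurable_of_Ioi fun t => ?_
  change MeasurableSet {x | t < _}
  rw [setOf_lt_maximalFunction]
  exact .biUnion (D.countable_cubes.mono fun _ hQ => hQ.1) fun Q _ => Q.measurableSet_toSet

/-- Calderón–Zygmund decomposition into maximal cubes, which exist because the quadrants have
infinite measure while every cube on which `g` has average `> t` has measure `≤ t⁻¹ ∫ g`. -/
theorem measure_lt_maximalFunction_le (hquad : ∀ x, μ (D.quadrant x) = ∞) {t : ℝ≥0∞}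
    (ht0 : t ≠ 0) (ht : t ≠ ∞) :
    μ {x | t < D.maximalFunction μ g x} ≤ t⁻¹ * ∫⁻ x, g x ∂μ := by
  rcases eq_or_ne (∫⁻ x, g x ∂μ) ∞ with hg | hg
  · rw [hg, ENNReal.mul_top (ENNReal.inv_ne_zero.2 ht)]
    exact le_top
  set P : Cube d → Prop := fun Q => t < ⨍⁻ y in Q.toSet, g y ∂μ
  set S := D.maximalCubes P
  have hS : S.Countable := D.countable_cubes.mono (maximalCubes_subset_cubes P)
  have hPB : ∀ Q ∈ D.cubes, P Q → μ Q.toSet ≤ t⁻¹ * ∫⁻ x, g x ∂μ := fun Q _ hQ =>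
    (measure_le_inv_mul_of_lt_setLAverage hQ).trans (by gcongr; exact Measure.restrict_le_self)
  have hcover : {x | t < D.maximalFunction μ g x} ⊆ ⋃ Q ∈ S, Q.toSet := by
    rw [setOf_lt_maximalFunction]
    refine iUnion₂_subset fun Q hQ x hx => ?_
    obtain ⟨R, hR, hxR⟩ := D.exists_mem_maximalCubes
      (ENNReal.mul_ne_top (ENNReal.inv_ne_top.2 ht0) hg) hPB (hquad x) hQ.1 hQ.2 hx
    exact mem_iUnion₂.2 ⟨R, hR, hxR⟩
  calc μ {x | t < D.maximalFunction μ g x} ≤ ∑' Q : S, μ (Q : Cube d).toSet :=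
        (measure_mono hcover).trans (measure_biUnion_le μ hS _)
    _ ≤ ∑' Q : S, t⁻¹ * ∫⁻ y in (Q : Cube d).toSet, g y ∂μ :=
        ENNReal.tsum_le_tsum fun Q =>
          let ⟨_, _, hPQ, _⟩ := Q.2
          measure_le_inv_mul_of_lt_setLAverage hPQ
    _ = t⁻¹ * ∫⁻ y in ⋃ Q ∈ S, Q.toSet, g y ∂μ := by
        rw [ENNReal.tsum_mul_left, lintegral_biUnion hS (fun Q _ => Q.measurableSet_toSet)
          (pairwiseDisjoint_maximalCubes P)]
    _ ≤ t⁻¹ * ∫⁻ x, g x ∂μ := by gcongr; exact Measure.restrict_le_self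

/-- Splitting `g` at height `t`: the part `≤ t` raises `M g` by at most `t`. -/
theorem measure_two_mul_lt_maximalFunction_le (hg : Measurable g)
    (hquad : ∀ x, μ (D.quadrant x) = ∞) {t : ℝ≥0∞} (ht0 : t ≠ 0) (ht : t ≠ ∞) :
    μ {x | 2 * t < D.maximalFunction μ g x} ≤
      t⁻¹ * ∫⁻ x, {y | t < g y}.indicator g x ∂μ := by
  set s := {y | t < g y}
  refine (measure_mono fun x (hx : 2 * t < _) => ?_).trans
    (measure_lt_maximalFunction_le hquad ht0 ht)
  by_contra hle
  replace hle : D.maximalFunction μ (s.indicator g) x ≤ t := not_lt.1 hle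
  have hsmall : D.maximalFunction μ (sᶜ.indicator g) x ≤ t :=
    maximalFunction_le_of_le fun y =>
      indicator_apply_le' (fun hy => not_lt.1 hy) fun _ => zero_le
  refine hx.not_ge ?_
  calc D.maximalFunction μ g x = D.maximalFunction μ (s.indicator g + sᶜ.indicator g) x := by
        rw [indicator_self_add_compl]
    _ ≤ t + t := (maximalFunction_add_le
        (hg.indicator (measurableSet_lt measurable_const hg)).aemeasurable).trans
          (add_le_add hle hsmall)
    _ = 2 * t := (two_mul t).symm

end DyadicLattice

lemma two_zpow_ne_zero (n : ℤ) : (2 : ℝ≥0∞) ^ n ≠ 0 :=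
  (ENNReal.zpow_pos two_ne_zero ENNReal.ofNat_ne_top n).ne'

lemma two_zpow_ne_top (n : ℤ) : (2 : ℝ≥0∞) ^ n ≠ ∞ :=
  ENNReal.zpow_ne_top two_ne_zero ENNReal.ofNat_ne_top n

noncomputable def dyadicPowSum (r : ℝ) (a : ℝ≥0∞) : ℝ≥0∞ :=
  ∑' n : ℤ, if (2 : ℝ≥0∞) ^ n < a then ((2 : ℝ≥0∞) ^ n) ^ r else 0

lemma two_zpow_rpow (n : ℤ) (r : ℝ) : ((2 : ℝ≥0∞) ^ n) ^ r = 2 ^ (n * r) := by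
  rw [← ENNReal.rpow_intCast, ← ENNReal.rpow_mul]

lemma exists_two_zpow_lt_le {a : ℝ≥0∞} (ha0 : a ≠ 0) (ha : a ≠ ∞) :
    ∃ m : ℤ, (2 : ℝ≥0∞) ^ m < a ∧ a ≤ 2 ^ (m + 1) :=
  ENNReal.exists_mem_Ioc_zpow ha0 ha one_lt_two (by norm_num)

lemma dyadicPowSum_top {r : ℝ} (hr : 0 < r) : dyadicPowSum r ∞ = ∞ := by
  refine top_le_iff.1 ?_
  calc (∞ : ℝ≥0∞) = ∑' _ : ℕ, 1 := (ENNReal.tsum_const_eq_top_of_ne_zero one_ne_zero).symm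
    _ ≤ ∑' j : ℕ, if (2 : ℝ≥0∞) ^ (j : ℤ) < ∞ then ((2 : ℝ≥0∞) ^ (j : ℤ)) ^ r else 0 :=
        ENNReal.tsum_le_tsum fun j => by
          rw [if_pos (by simp), zpow_natCast]
          exact ENNReal.one_le_rpow (one_le_pow₀ one_le_two) hr
    _ ≤ dyadicPowSum r ∞ := ENNReal.tsum_comp_le_tsum_of_injective Nat.cast_injective _

lemma rpow_le_two_rpow_mul_dyadicPowSum {r : ℝ} (hr : 0 < r) (a : ℝ≥0∞) :
    a ^ r ≤ 2 ^ r * dyadicPowSum r a := by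
  rcases eq_or_ne a 0 with rfl | ha0
  · rw [ENNReal.zero_rpow_of_pos hr]
    exact zero_le
  rcases eq_or_ne a ∞ with rfl | ha
  · rw [dyadicPowSum_top hr, ENNReal.mul_top (by positivity)]
    exact le_top
  obtain ⟨m, hma, ham⟩ := exists_two_zpow_lt_le ha0 ha
  calc a ^ r ≤ ((2 : ℝ≥0∞) ^ (m + 1)) ^ r := ENNReal.rpow_le_rpow ham hr.le
    _ = 2 ^ r * ((2 : ℝ≥0∞) ^ m) ^ r := by
        rw [ENNReal.zpow_add two_ne_zero ENNReal.ofNat_ne_top, zpow_one, mul_comm,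
          ENNReal.mul_rpow_of_nonneg _ _ hr.le]
    _ ≤ 2 ^ r * dyadicPowSum r a := by
        gcongr
        exact (if_pos hma).symm.le.trans (ENNReal.le_tsum m)

lemma dyadicPowSum_le {r : ℝ} (hr : 0 < r) (a : ℝ≥0∞) :
    dyadicPowSum r a ≤ (1 - 2 ^ (-r))⁻¹ * a ^ r := by
  rcases eq_or_ne a 0 with rfl | ha0
  · simp [dyadicPowSum]
  rcases eq_or_ne a ∞ with rfl | ha
  · rw [ENNReal.top_rpow_of_pos hr, ENNReal.mul_top (ENNReal.inv_ne_zero.2 (by simp))]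
    exact le_top
  obtain ⟨m, hma, ham⟩ := exists_two_zpow_lt_le ha0 ha
  have hterm : ∀ n : ℤ, (if (2 : ℝ≥0∞) ^ n < a then ((2 : ℝ≥0∞) ^ n) ^ r else 0) ≤
      if n ≤ m then ((2 : ℝ≥0∞) ^ m) ^ r * (2 ^ (-r)) ^ (m - n).toNat else 0 := by
    intro n
    split_ifs with h hnm hnm
    · rw [two_zpow_rpow, two_zpow_rpow, ← ENNReal.rpow_natCast, ← ENNReal.rpow_mul,
        ← ENNReal.rpow_add _ _ two_ne_zero ENNReal.ofNat_ne_top]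
      refine le_of_eq (congrArg _ ?_)
      rw [← Int.cast_natCast, Int.toNat_of_nonneg (by omega)]
      push_cast
      ring
    · exact absurd (ham.trans (ENNReal.zpow_le_of_le one_le_two (by omega))) h.not_ge
    · exact zero_le
    · exact le_rfl
  have hsupp : Function.support (fun n : ℤ =>
      if n ≤ m then ((2 : ℝ≥0∞) ^ m) ^ r * (2 ^ (-r)) ^ (m - n).toNat else 0) ⊆
        Set.range fun j : ℕ => m - j := fun n hn => by
    refine ⟨(m - n).toNat, ?_⟩
    by_cases hnm : n ≤ m
    · simp only; omega
    · exact absurd (if_neg hnm) hn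
  calc dyadicPowSum r a
      ≤ ∑' n : ℤ, if n ≤ m then ((2 : ℝ≥0∞) ^ m) ^ r * (2 ^ (-r)) ^ (m - n).toNat else 0 :=
        ENNReal.tsum_le_tsum hterm
    _ = ∑' j : ℕ, ((2 : ℝ≥0∞) ^ m) ^ r * (2 ^ (-r)) ^ j := by
        have hinj : Function.Injective fun j : ℕ => m - j := fun i j h => by simpa using h
        rw [← hinj.tsum_eq hsupp]
        congr 1 with j
        rw [if_pos (by omega)]
        simp
    _ = (1 - 2 ^ (-r))⁻¹ * ((2 : ℝ≥0∞) ^ m) ^ r := by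
        rw [ENNReal.tsum_mul_left, ENNReal.tsum_geometric, mul_comm]
    _ ≤ (1 - 2 ^ (-r))⁻¹ * a ^ r := by gcongr

section LayerCake

variable {α : Type*} [MeasurableSpace α] {μ : Measure α}

lemma lintegral_rpow_le_tsum_measure {F : α → ℝ≥0∞} (hF : Measurable F) {p : ℝ} (hp : 0 < p) :
    ∫⁻ x, F x ^ p ∂μ ≤ 2 ^ p * ∑' n : ℤ, ((2 : ℝ≥0∞) ^ n) ^ p * μ {x | 2 ^ n < F x} := by
  have hlevel : ∀ n : ℤ, MeasurableSet {x | (2 : ℝ≥0∞) ^ n < F x} :=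
    fun n => measurableSet_lt measurable_const hF
  have hterm : ∀ n : ℤ, (fun x => if (2 : ℝ≥0∞) ^ n < F x then ((2 : ℝ≥0∞) ^ n) ^ p else 0) =
      {x | (2 : ℝ≥0∞) ^ n < F x}.indicator fun _ => ((2 : ℝ≥0∞) ^ n) ^ p := fun n => by
    ext x
    simp only [indicator_apply, mem_ofPred_eq]
  calc ∫⁻ x, F x ^ p ∂μ ≤ ∫⁻ x, 2 ^ p * dyadicPowSum p (F x) ∂μ :=
        lintegral_mono fun x => rpow_le_two_rpow_mul_dyadicPowSum hp (F x)
    _ = 2 ^ p * ∑' n : ℤ, ((2 : ℝ≥0∞) ^ n) ^ p * μ {x | 2 ^ n < F x} := by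
        simp only [dyadicPowSum]
        rw [lintegral_const_mul' _ _ (by simp), lintegral_tsum fun n =>
          hterm n ▸ (measurable_const.indicator (hlevel n)).aemeasurable]
        simp only [hterm, lintegral_indicator_const (hlevel _)]

lemma tsum_mul_lintegral_indicator_le {g : α → ℝ≥0∞} (hg : Measurable g) {p : ℝ} (hp : 1 < p) :
    ∑' n : ℤ, ((2 : ℝ≥0∞) ^ n) ^ (p - 1) * ∫⁻ x, {y | 2 ^ n < g y}.indicator g x ∂μ ≤
      (1 - 2 ^ (-(p - 1)))⁻¹ * ∫⁻ x, g x ^ p ∂μ := by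
  have hind : ∀ n : ℤ, Measurable ({y | (2 : ℝ≥0∞) ^ n < g y}.indicator g) :=
    fun n => hg.indicator (measurableSet_lt measurable_const hg)
  calc ∑' n : ℤ, ((2 : ℝ≥0∞) ^ n) ^ (p - 1) * ∫⁻ x, {y | 2 ^ n < g y}.indicator g x ∂μ
      = ∫⁻ x, g x * dyadicPowSum (p - 1) (g x) ∂μ := by
        simp only [← lintegral_const_mul _ (hind _)]
        rw [← lintegral_tsum fun n => ((hind n).const_mul _).aemeasurable]
        congr 1 with x
        rw [dyadicPowSum, ← ENNReal.tsum_mul_left]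
        congr 1 with n
        by_cases h : (2 : ℝ≥0∞) ^ n < g x <;> simp [h, mul_comm]
    _ ≤ ∫⁻ x, g x * ((1 - 2 ^ (-(p - 1)))⁻¹ * g x ^ (p - 1)) ∂μ := by
        gcongr with x
        exact dyadicPowSum_le (by linarith) _
    _ = (1 - 2 ^ (-(p - 1)))⁻¹ * ∫⁻ x, g x ^ p ∂μ := by
        rw [← lintegral_const_mul _ (hg.pow_const p)]
        congr 1 with x
        nth_rewrite 1 [mul_left_comm, ← ENNReal.rpow_one (g x)]
        rw [← ENNReal.rpow_add_of_nonneg _ _ zero_le_one (by linarith), add_sub_cancel]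

end LayerCake

namespace DyadicLattice

variable {d : ℕ} {D : DyadicLattice d} {μ : Measure (Fin d → ℝ)} {g : (Fin d → ℝ) → ℝ≥0∞}

noncomputable def strongTypeConst (p : ℝ) : ℝ≥0∞ := 2 ^ p * 2 ^ p * (1 - 2 ^ (-(p - 1)))⁻¹

lemma strongTypeConst_ne_top {p : ℝ} (hp : 1 < p) : strongTypeConst p ≠ ∞ := by
  have h : (2 : ℝ≥0∞) ^ (-(p - 1)) < 1 :=
    ENNReal.rpow_lt_one_of_one_lt_of_neg one_lt_two (by linarith)
  have h2 : (2 : ℝ≥0∞) ^ p ≠ ∞ := ENNReal.rpow_ne_top_of_nonneg (by linarith) ENNReal.ofNat_ne_top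
  exact ENNReal.mul_ne_top (ENNReal.mul_ne_top h2 h2) (ENNReal.inv_ne_top.2 (tsub_pos_of_lt h).ne')

theorem lintegral_maximalFunction_rpow_le {p : ℝ} (hp : 1 < p) (hg : AEMeasurable g μ)
    (hquad : ∀ x, μ (D.quadrant x) = ∞) :
    ∫⁻ x, D.maximalFunction μ g x ^ p ∂μ ≤
      strongTypeConst p * ∫⁻ x, g x ^ p ∂μ := by
  obtain ⟨g', hg', hgg'⟩ := hg
  have hgp : ∫⁻ x, g x ^ p ∂μ = ∫⁻ x, g' x ^ p ∂μ :=
    lintegral_congr_ae (hgg'.mono fun x hx => by simp only [hx])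
  rw [maximalFunction_congr_ae hgg', hgp]
  set M := D.maximalFunction μ g'
  calc ∫⁻ x, M x ^ p ∂μ
      ≤ 2 ^ p * ∑' n : ℤ, ((2 : ℝ≥0∞) ^ n) ^ p * μ {x | 2 ^ n < M x} :=
        lintegral_rpow_le_tsum_measure measurable_maximalFunction (by linarith)
    _ = 2 ^ p * ∑' k : ℤ, (2 * (2 : ℝ≥0∞) ^ k) ^ p * μ {x | 2 * 2 ^ k < M x} := by
        rw [← (Equiv.addRight (1 : ℤ)).tsum_eq]
        simp only [Equiv.coe_addRight, ENNReal.zpow_add two_ne_zero ENNReal.ofNat_ne_top,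
          zpow_one, mul_comm]
    _ ≤ 2 ^ p * ∑' k : ℤ, (2 * (2 : ℝ≥0∞) ^ k) ^ p *
          (((2 : ℝ≥0∞) ^ k)⁻¹ * ∫⁻ x, {y | 2 ^ k < g' y}.indicator g' x ∂μ) := by
        gcongr with k
        exact measure_two_mul_lt_maximalFunction_le hg' hquad (two_zpow_ne_zero k)
          (two_zpow_ne_top k)
    _ = 2 ^ p * (2 ^ p * ∑' k : ℤ, ((2 : ℝ≥0∞) ^ k) ^ (p - 1) *
          ∫⁻ x, {y | 2 ^ k < g' y}.indicator g' x ∂μ) := by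
        congr 1
        rw [← ENNReal.tsum_mul_left]
        refine tsum_congr fun k => ?_
        rw [ENNReal.mul_rpow_of_nonneg _ _ (by linarith), ENNReal.rpow_sub _ _
          (two_zpow_ne_zero k) (two_zpow_ne_top k), ENNReal.rpow_one, div_eq_mul_inv]
        ring
    _ ≤ 2 ^ p * (2 ^ p * ((1 - 2 ^ (-(p - 1)))⁻¹ * ∫⁻ x, g' x ^ p ∂μ)) := by
        gcongr
        exact tsum_mul_lintegral_indicator_le hg' hp
    _ = strongTypeConst p * ∫⁻ x, g' x ^ p ∂μ := by rw [strongTypeConst]; ring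

end DyadicLattice

lemma MeasureTheory.setLIntegral_enorm_le_eLpNorm_mul_rpow {α E : Type*} [MeasurableSpace α]
    [NormedAddCommGroup E] {μ : Measure α} {f : α → E} {p : ℝ≥0∞} (hp : 1 ≤ p)
    (hf : AEStronglyMeasurable f μ) (s : Set α) :
    ∫⁻ x in s, ‖f x‖ₑ ∂μ ≤ eLpNorm f p μ * μ s ^ (1 - 1 / p.toReal) := by
  rw [← eLpNorm_one_eq_lintegral_enorm, ← Measure.restrict_apply_univ]
  calc eLpNorm f 1 (μ.restrict s)
      ≤ eLpNorm f p (μ.restrict s) * μ.restrict s univ ^ (1 / (1 : ℝ≥0∞).toReal - 1 / p.toReal) :=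
        eLpNorm_le_eLpNorm_mul_rpow_measure_univ hp hf.restrict
    _ ≤ eLpNorm f p μ * μ.restrict s univ ^ (1 - 1 / p.toReal) := by
        rw [ENNReal.toReal_one, div_one]
        gcongr
        exact Measure.restrict_le_self

lemma ENNReal.rpow_mul_le_rpow_mul_rpow {A u N : ℝ≥0∞} {a θ : ℝ} (hθ0 : 0 ≤ θ) (hθ1 : θ ≤ 1)
    (h : u * A ^ a ≤ N) : A ^ ((1 - θ) * a) * u ≤ u ^ θ * N ^ (1 - θ) := by
  have hu : u = u ^ θ * u ^ (1 - θ) := by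
    rw [← ENNReal.rpow_add_of_nonneg _ _ hθ0 (by linarith), add_sub_cancel, ENNReal.rpow_one]
  calc A ^ ((1 - θ) * a) * u = u ^ θ * (u * A ^ a) ^ (1 - θ) := by
        conv_lhs => rw [hu]
        rw [ENNReal.mul_rpow_of_nonneg _ _ (by linarith), ← ENNReal.rpow_mul, mul_comm a]
        ring
    _ ≤ u ^ θ * N ^ (1 - θ) := by gcongr

lemma MeasureTheory.rpow_sub_one_mul_setLIntegral_le {α E : Type*} [MeasurableSpace α]
    [NormedAddCommGroup E] {μ : Measure α} {f : α → E} {p : ℝ≥0∞} (hp : 1 < p)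
    (hf : AEStronglyMeasurable f μ) {θ : ℝ} (hθ0 : 0 ≤ θ) (hθ1 : θ ≤ 1) (s : Set α) :
    μ s ^ ((1 - θ) / p.toReal - 1) * ∫⁻ x in s, ‖f x‖ₑ ∂μ ≤
      (⨍⁻ x in s, ‖f x‖ₑ ∂μ) ^ θ * eLpNorm f p μ ^ (1 - θ) := by
  have ha : 1 / p.toReal < 1 := by
    rcases eq_or_ne p ∞ with rfl | hpt
    · simp
    · have : 1 < p.toReal := by simpa using ENNReal.toReal_strict_mono hpt hp
      exact (div_lt_one (by linarith)).2 this
  have hneg : (1 - θ) / p.toReal - 1 < 0 := by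
    have : (1 - θ) / p.toReal ≤ 1 / p.toReal := by gcongr; linarith
    linarith
  rcases eq_or_ne (μ s) 0 with hA0 | hA0
  · rw [setLIntegral_measure_zero _ _ hA0, mul_zero]
    exact zero_le
  rcases eq_or_ne (μ s) ∞ with hAt | hAt
  · rw [hAt, ENNReal.top_rpow_of_neg hneg, zero_mul]
    exact zero_le
  have hsplit : μ s ^ ((1 - θ) / p.toReal - 1) * ∫⁻ x in s, ‖f x‖ₑ ∂μ =
      μ s ^ ((1 - θ) * (1 / p.toReal)) * ((∫⁻ x in s, ‖f x‖ₑ ∂μ) / μ s) := by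
    rw [ENNReal.rpow_sub _ _ hA0 hAt, ENNReal.rpow_one, mul_one_div]
    simp only [div_eq_mul_inv]
    ring
  rw [setLAverage_eq, hsplit]
  refine ENNReal.rpow_mul_le_rpow_mul_rpow hθ0 hθ1 ?_
  calc (∫⁻ x in s, ‖f x‖ₑ ∂μ) / μ s * μ s ^ (1 / p.toReal)
      ≤ eLpNorm f p μ * μ s ^ (1 - 1 / p.toReal) / μ s * μ s ^ (1 / p.toReal) := by
        gcongr
        exact setLIntegral_enorm_le_eLpNorm_mul_rpow hp.le hf s
    _ = eLpNorm f p μ := by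
        rw [div_eq_mul_inv, ← ENNReal.rpow_neg_one, mul_assoc, mul_assoc,
          ← ENNReal.rpow_add _ _ hA0 hAt, ← ENNReal.rpow_add _ _ hA0 hAt]
        ring_nf
        rw [ENNReal.rpow_zero, mul_one]

lemma MeasureTheory.lintegral_rpow_le_of_le_rpow_mul_rpow {X : Type*} [MeasurableSpace X]
    {μ : Measure X} {h G : X → ℝ≥0∞} {N : ℝ≥0∞} {p q : ℝ} (hp : 0 < p) (hpq : p ≤ q)
    (hN : N ≠ ∞) (hle : ∀ x, h x ≤ G x ^ (p / q) * N ^ (1 - p / q)) :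
    ∫⁻ x, h x ^ q ∂μ ≤ N ^ (q - p) * ∫⁻ x, G x ^ p ∂μ := by
  rw [← lintegral_const_mul' _ _ (ENNReal.rpow_ne_top_of_nonneg (by linarith) hN)]
  refine lintegral_mono fun x => (ENNReal.rpow_le_rpow (hle x) (by linarith)).trans_eq ?_
  rw [ENNReal.mul_rpow_of_nonneg _ _ (by linarith), ← ENNReal.rpow_mul, ← ENNReal.rpow_mul,
    mul_comm]
  have hq : q ≠ 0 := (hp.trans_le hpq).ne'
  congr 2 <;> field_simp

lemma ENNReal.eq_one_div_toReal_sub_of_inv_eq {p q : ℝ≥0∞} {s : ℝ} (hp : p ≠ 0) (hs : 0 ≤ s)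
    (h : p⁻¹ = q⁻¹ + ENNReal.ofReal s) : s = 1 / p.toReal - 1 / q.toReal := by
  have hq : q⁻¹ ≠ ∞ := ne_top_of_le_ne_top (ENNReal.inv_ne_top.2 hp) (h ▸ le_self_add)
  have h' := congrArg ENNReal.toReal h
  rw [ENNReal.toReal_add hq ENNReal.ofReal_ne_top, ENNReal.toReal_inv, ENNReal.toReal_inv,
    ENNReal.toReal_ofReal hs] at h'
  rw [one_div, one_div, h']
  ring

section Fractional

variable {d : ℕ} {D : DyadicLattice d} {w f : (Fin d → ℝ) → ℝ} {p q : ℝ≥0∞} {α : ℝ}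

lemma wMeasure_apply {s : Set (Fin d → ℝ)} (hs : MeasurableSet s) : wMeasure w s = wInt w s :=
  withDensity_apply _ hs

theorem MwDyadic_le_maximalFunction_rpow_mul (hw : IsWeight w) (hf : MemLp f p (wMeasure w))
    (hp : 1 < p) {θ : ℝ} (hθ0 : 0 ≤ θ) (hθ1 : θ ≤ 1) (hα : α / d = (1 - θ) / p.toReal)
    (x : Fin d → ℝ) :
    MwDyadic D α w f x ≤
      D.maximalFunction (wMeasure w) (‖f ·‖ₑ) x ^ θ * eLpNorm f p (wMeasure w) ^ (1 - θ) := by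
  have hw' : AEMeasurable (fun y => ENNReal.ofReal (w y)) volume :=
    hw.1.aestronglyMeasurable.aemeasurable.ennreal_ofReal
  refine iSup₂_le fun Q hQ => iSup_le fun hx => ?_
  have hQ' := Q.measurableSet_toSet
  have hint : ∫⁻ y in Q.toSet, (‖f y‖₊ : ℝ≥0∞) * ENNReal.ofReal (w y) =
      ∫⁻ y in Q.toSet, ‖f y‖ₑ ∂wMeasure w := by
    rw [wMeasure, setLIntegral_withDensity_eq_lintegral_mul₀' hw' hf.1.enorm hQ']
    simp only [Pi.mul_apply, mul_comm, enorm_eq_nnnorm]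
  rw [← wMeasure_apply hQ', hint, hα]
  calc _ ≤ (⨍⁻ y in Q.toSet, ‖f y‖ₑ ∂wMeasure w) ^ θ * eLpNorm f p (wMeasure w) ^ (1 - θ) :=
        rpow_sub_one_mul_setLIntegral_le hp hf.1 hθ0 hθ1 _
    _ ≤ _ := by gcongr; exact D.setLAverage_le_maximalFunction hQ hx

theorem eLpNormENN_MwDyadic_top_le (hw : IsWeight w) (hf : MemLp f p (wMeasure w)) (hp : 1 < p)
    (hα : α / d = 1 / p.toReal) :
    eLpNormENN (MwDyadic D α w f) ∞ (wMeasure w) ≤ eLpNorm f p (wMeasure w) := by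
  rw [eLpNormENN, if_pos rfl]
  refine essSup_le_of_ae_le _ (ae_of_all _ fun x => ?_)
  simpa using MwDyadic_le_maximalFunction_rpow_mul hw hf hp le_rfl zero_le_one
    (by rw [hα, sub_zero]) x

theorem eLpNormENN_MwDyadic_le (hw : IsWeight w) (hquad : ∀ x, wInt w (D.quadrant x) = ∞)
    (hf : MemLp f p (wMeasure w)) (hp : 1 < p) (hpq : p ≤ q) (hq : q ≠ ∞)
    (hα : α / d = 1 / p.toReal - 1 / q.toReal) :
    eLpNormENN (MwDyadic D α w f) q (wMeasure w) ≤
      DyadicLattice.strongTypeConst p.toReal ^ (1 / q.toReal) * eLpNorm f p (wMeasure w) := by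
  set μ := wMeasure w
  set N := eLpNorm f p μ
  set K := DyadicLattice.strongTypeConst p.toReal
  have hpt : p ≠ ∞ := ne_top_of_le_ne_top hq hpq
  have hp1 : 1 < p.toReal := by simpa using ENNReal.toReal_strict_mono hpt hp
  have hpq' : p.toReal ≤ q.toReal := ENNReal.toReal_mono hq hpq
  have hquad' : ∀ x, μ (D.quadrant x) = ∞ := fun x =>
    (wMeasure_apply (D.measurableSet_quadrant x)).trans (hquad x)
  have hpointwise := MwDyadic_le_maximalFunction_rpow_mul (D := D) hw hf hp
    (θ := p.toReal / q.toReal) (by positivity) (div_le_one_of_le₀ hpq' (by linarith))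
    (by rw [hα]; field_simp)
  have hNp : ∫⁻ x, ‖f x‖ₑ ^ p.toReal ∂μ = N ^ p.toReal := by
    rw [lintegral_rpow_enorm_eq_rpow_eLpNorm' (by linarith),
      ← eLpNorm_eq_eLpNorm' (by positivity) hpt]
  rw [eLpNormENN, if_neg hq]
  calc (∫⁻ x, MwDyadic D α w f x ^ q.toReal ∂μ) ^ (1 / q.toReal)
      ≤ (N ^ (q.toReal - p.toReal) * (K * N ^ p.toReal)) ^ (1 / q.toReal) := by
        gcongr
        refine (lintegral_rpow_le_of_le_rpow_mul_rpow (by linarith) hpq' hf.2.ne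
          hpointwise).trans ?_
        rw [← hNp]
        gcongr
        exact DyadicLattice.lintegral_maximalFunction_rpow_le hp1 hf.1.enorm hquad'
    _ = K ^ (1 / q.toReal) * N := by
        rw [mul_left_comm, ← ENNReal.rpow_add_of_nonneg _ _ (by linarith) (by linarith),
          sub_add_cancel, ENNReal.mul_rpow_of_nonneg _ _ (by positivity), ← ENNReal.rpow_mul,
          mul_one_div_cancel (by linarith), ENNReal.rpow_one]

end Fractional

theorem strong_type_weighted_dyadic_fractional_maximal_general
    {d : ℕ}
    (p q : ℝ≥0∞) (hp : 1 < p) (hpq : p ≤ q)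
    (α : ℝ) (hα0 : 0 ≤ α)
    (hexp : p⁻¹ = q⁻¹ + ENNReal.ofReal (α / d)) :
    ∃ C : ℝ≥0∞, C ≠ ∞ ∧
      ∀ (D : DyadicLattice d) (w : (Fin d → ℝ) → ℝ), IsWeight w →
        (∀ x : Fin d → ℝ, wInt w (D.quadrant x) = ∞) →
        ∀ f : (Fin d → ℝ) → ℝ, MemLp f p (wMeasure w) →
          eLpNormENN (MwDyadic D α w f) q (wMeasure w) ≤ C * eLpNorm f p (wMeasure w) := by
  have hα := ENNReal.eq_one_div_toReal_sub_of_inv_eq (zero_lt_one.trans hp).ne'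
    (div_nonneg hα0 d.cast_nonneg) hexp
  rcases eq_or_ne q ∞ with rfl | hq
  · refine ⟨1, ENNReal.one_ne_top, fun D w hw _ f hf => ?_⟩
    rw [one_mul]
    exact eLpNormENN_MwDyadic_top_le hw hf hp (by simpa using hα)
  · have hp1 : 1 < p.toReal := by
      simpa using ENNReal.toReal_strict_mono (ne_top_of_le_ne_top hq hpq) hp
    exact ⟨_, ENNReal.rpow_ne_top_of_nonneg (by positivity)
      (DyadicLattice.strongTypeConst_ne_top hp1),
      fun D w hw hquad f hf => eLpNormENN_MwDyadic_le hw hquad hf hp hpq hq hα⟩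

/-- strong type estimate for the weighted dyadic fractional maximal operator. -/
theorem strong_type_weighted_dyadic_fractional_maximal
    {d : ℕ} (hd : 0 < d)
    (p q : ℝ≥0∞) (hp : 1 < p) (hpq : p ≤ q)
    (α : ℝ) (hα0 : 0 ≤ α) (hαd : α < d)
    (hexp : p⁻¹ = q⁻¹ + ENNReal.ofReal (α / d)) :
    ∃ C : ℝ≥0∞, C ≠ ∞ ∧
      ∀ (D : DyadicLattice d) (w : (Fin d → ℝ) → ℝ), IsWeight w →
        (∀ x : Fin d → ℝ, wInt w (D.quadrant x) = ∞) →
        ∀ f : (Fin d → ℝ) → ℝ, MemLp f p (wMeasure w) →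
          eLpNormENN (MwDyadic D α w f) q (wMeasure w) ≤ C * eLpNorm f p (wMeasure w) :=
  strong_type_weighted_dyadic_fractional_maximal_general p q hp hpq α hα0 hexp
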